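/- Let f : 𝔽₂ⁿ → ℤ/4ℤ be a ℤ/4ℤ-valued quadratic form with associated symmetric bilinear form B, and suppose B is non-alternating (B(x,x) = 1 for some x) with matrix of rank r over 𝔽₂. Then there exist a linear automorphism φ of 𝔽₂ⁿ and a vector w ∈ {0,1}^n such that for all y ∈ 𝔽₂ⁿ, f(φ(y)) = Σ_{j=1}^{r} ỹ_j + 2·Σ_{i=1}^{n} w_i·ỹ_i computed in ℤ/4ℤ, where ỹ_i ∈ {0,1} ⊆ ℤ/4ℤ denotes the representative of the coordinate y_i ∈ 𝔽₂. -/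
import Mathlib

open Module Submodule Finset Matrix

/-- The embedding `ℤ/2ℤ → ℤ/4ℤ` sending `0 ↦ 0` and `1 ↦ 2`. -/
def emb2 (b : ZMod 2) : ZMod 4 := 2 * (b.val : ZMod 4)

namespace Stmt9Aux

variable {n : ℕ}

abbrev V (n : ℕ) := Fin n → ZMod 2

lemma zmod2_cases (c : ZMod 2) : c = 0 ∨ c = 1 := by
  revert c; decide

lemma addself (x : V n) : x + x = 0 := by
  have : x + x = (1 + 1 : ZMod 2) • x := by rw [add_smul, one_smul]
  rw [this, show (1 + 1 : ZMod 2) = 0 by decide, zero_smul]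

lemma cut (W : Submodule (ZMod 2) (V n)) (L : V n →ₗ[ZMod 2] ZMod 2)
    (v : V n) (hv : v ∈ W) (hLv : L v = 1) :
    finrank (ZMod 2) ↥(W ⊓ LinearMap.ker L) + 1 = finrank (ZMod 2) W ∧
      span (ZMod 2) {v} ⊔ (W ⊓ LinearMap.ker L) = W := by
  set W' := W ⊓ LinearMap.ker L with hW'
  constructor
  · have h1 := LinearMap.finrank_range_add_finrank_ker (L.domRestrict W)
    have hker : LinearMap.ker (L.domRestrict W) = W'.comap W.subtype := by
      ext ⟨x, hx⟩
      simp [W', LinearMap.mem_ker, hx]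
    have hkr : finrank (ZMod 2) ↥(LinearMap.ker (L.domRestrict W)) = finrank (ZMod 2) W' := by
      rw [hker]
      exact LinearEquiv.finrank_eq (Submodule.comapSubtypeEquivOfLe inf_le_left)
    have hrange : LinearMap.range (L.domRestrict W) = ⊤ := by
      rw [LinearMap.range_eq_top]
      intro c
      exact ⟨c • ⟨v, hv⟩, by simp [hLv]⟩
    rw [hrange, hkr] at h1
    simpa [finrank_top, add_comm] using h1
  · apply le_antisymm
    · refine sup_le ?_ inf_le_left
      simpa [span_le] using hv
    · intro x hx
      have hx' : x + L x • v ∈ W' := by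
        refine ⟨W.add_mem hx (W.smul_mem _ hv), ?_⟩
        have h2 : L (x + L x • v) = L x + L x * L v := by
          rw [map_add, _root_.map_smul, smul_eq_mul]
        simp only [SetLike.mem_coe, LinearMap.mem_ker, h2, hLv, mul_one]
        rcases zmod2_cases (L x) with h | h <;> rw [h] <;> decide
      have hxe : x = L x • v + (x + L x • v) := by
        rw [← add_assoc, add_comm (L x • v) x, add_assoc, addself, add_zero]
      rw [hxe]
      exact add_mem (mem_sup_left (smul_mem _ _ (mem_span_singleton_self v)))
        (mem_sup_right hx')

lemma notmem_span (Bl : V n →ₗ[ZMod 2] V n →ₗ[ZMod 2] ZMod 2)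
    (x : V n) (T : Set (V n)) (hT : T ⊆ LinearMap.ker (Bl x))
    (hx : Bl x x = 1) : x ∉ span (ZMod 2) T := by
  intro hmem
  have : span (ZMod 2) T ≤ LinearMap.ker (Bl x) := span_le.mpr hT
  have := this hmem
  rw [LinearMap.mem_ker] at this
  rw [this] at hx
  exact absurd hx (by decide)

lemma key (Bl : V n →ₗ[ZMod 2] V n →ₗ[ZMod 2] ZMod 2)
    (hsymm : ∀ x y, Bl x y = Bl y x) :
    ∀ (k : ℕ) (W : Submodule (ZMod 2) (V n)),
      finrank (ZMod 2) W = k → (∃ v ∈ W, Bl v v = 1) →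
      ∃ (b : Fin k → V n) (s : ℕ), s ≤ k ∧
        span (ZMod 2) (Set.range b) = W ∧
        LinearIndependent (ZMod 2) b ∧
        ∀ i j, Bl (b i) (b j) = if i = j ∧ (i : ℕ) < s then 1 else 0 := by
  intro k
  induction k using Nat.strong_induction_on with
  | _ k IH =>
  rintro W hkW ⟨v, hvW, hvv⟩
  obtain ⟨hdim, hspan⟩ := cut W (Bl v) v hvW hvv
  set W' := W ⊓ LinearMap.ker (Bl v) with hW'def
  have hW'le : ∀ x ∈ W', Bl v x = 0 := fun x hx => hx.2
  obtain ⟨m, rfl⟩ : ∃ m, k = m + 1 := ⟨finrank (ZMod 2) W', by omega⟩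
  have hm : finrank (ZMod 2) W' = m := by omega
  by_cases hna : ∃ u ∈ W', Bl u u = 1
  · -- case 3 : non-alternating on W'
    obtain ⟨b', s', hs'le, hspan', hli', hgram'⟩ := IH m (by omega) W' hm hna
    have hb'mem : ∀ j, b' j ∈ W' := fun j =>
      hspan' ▸ subset_span (Set.mem_range_self j)
    refine ⟨Fin.cons v b', s' + 1, by omega, ?_, ?_, ?_⟩
    · rw [Fin.range_cons, span_insert, hspan', hspan]
    · refine hli'.fin_cons ?_
      rw [hspan']
      exact fun h => by rw [hW'le v h] at hvv; exact absurd hvv (by decide)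
    · intro i j
      induction i using Fin.cases with
      | zero =>
        induction j using Fin.cases with
        | zero => simp [hvv]
        | succ j' => simp [hW'le _ (hb'mem j'), (Fin.succ_ne_zero j').symm]
      | succ i' =>
        induction j using Fin.cases with
        | zero => simp [hsymm, hW'le _ (hb'mem i'), Fin.succ_ne_zero i']
        | succ j' =>
          rw [Fin.cons_succ, Fin.cons_succ, hgram' i' j']
          have : (i'.succ = j'.succ ∧ (i'.succ : ℕ) < s' + 1) ↔ (i' = j' ∧ (i' : ℕ) < s') := by
            simp [Fin.succ_inj, Fin.val_succ]
          simp only [this]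
  · push_neg at hna
    have halt : ∀ u ∈ W', Bl u u = 0 := by
      intro u hu
      rcases zmod2_cases (Bl u u) with h | h
      · exact h
      · exact absurd h (hna u hu)
    by_cases hz : ∀ u ∈ W', ∀ w ∈ W', Bl u w = 0
    · -- case 4a : B vanishes on W'
      let bb := (Module.finBasis (ZMod 2) ↥W').reindex (finCongr hm)
      set c : Fin m → V n := fun i => (bb i : V n) with hc
      have hcmem : ∀ i, c i ∈ W' := fun i => (bb i).2
      have hcli : LinearIndependent (ZMod 2) c :=
        bb.linearIndependent.map' W'.subtype (ker_subtype W')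
      have hcspan : span (ZMod 2) (Set.range c) = W' := by
        have : Set.range c = W'.subtype '' Set.range bb := by
          rw [← Set.range_comp]; rfl
        rw [this, span_image, bb.span_eq, Submodule.map_top, range_subtype]
      refine ⟨Fin.cons v c, 1, by omega, ?_, ?_, ?_⟩
      · rw [Fin.range_cons, span_insert, hcspan, hspan]
      · refine hcli.fin_cons ?_
        rw [hcspan]
        exact fun h => by rw [hW'le v h] at hvv; exact absurd hvv (by decide)
      · intro i j
        induction i using Fin.cases with
        | zero =>
          induction j using Fin.cases with
          | zero => simp [hvv]
          | succ j' => simp [hW'le _ (hcmem j'), (Fin.succ_ne_zero j').symm]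
        | succ i' =>
          induction j using Fin.cases with
          | zero => simp [hsymm, hW'le _ (hcmem i'), Fin.succ_ne_zero i']
          | succ j' =>
            rw [Fin.cons_succ, Fin.cons_succ, hz _ (hcmem i') _ (hcmem j')]
            simp [Fin.val_succ]
    · -- case 4b
      push_neg at hz
      obtain ⟨u, huW', w, hwW', huw0⟩ := hz
      have huw : Bl u w = 1 := (zmod2_cases _).resolve_left huw0
      obtain ⟨hdim2, hspan2⟩ := cut W' (Bl u) w hwW' huw
      set W2 := W' ⊓ LinearMap.ker (Bl u) with hW2def
      have hW2le : ∀ x ∈ W2, Bl u x = 0 := fun x hx => hx.2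
      have huW2 : u ∈ W2 := ⟨huW', LinearMap.mem_ker.mpr (halt u huW')⟩
      obtain ⟨hdim3, hspan3⟩ := cut W2 (Bl w) u huW2 (by rw [hsymm]; exact huw)
      set W3 := W2 ⊓ LinearMap.ker (Bl w) with hW3def
      have hW3le : ∀ x ∈ W3, Bl w x = 0 := fun x hx => hx.2
      -- basic orthogonality data
      have hvu : Bl v u = 0 := hW'le u huW'
      have hvw : Bl v w = 0 := hW'le w hwW'
      have huu : Bl u u = 0 := halt u huW'
      have hww : Bl w w = 0 := halt w hwW'
      have hwu : Bl w u = 1 := by rw [hsymm]; exact huw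
      have huv : Bl u v = 0 := by rw [hsymm]; exact hvu
      have hwv : Bl w v = 0 := by rw [hsymm]; exact hvw
      set v1 := v + u with hv1
      set v2 := v + w with hv2
      set v3 := v + u + w with hv3
      have e11 : Bl v1 v1 = 1 := by
        simp only [hv1, map_add, LinearMap.add_apply, hvv, hvu, huv, huu]; decide
      have e12 : Bl v1 v2 = 0 := by
        simp only [hv1, hv2, map_add, LinearMap.add_apply, hvv, hvw, huv, huw]; decide
      have e13 : Bl v1 v3 = 0 := by
        simp only [hv1, hv3, map_add, LinearMap.add_apply, hvv, hvu, hvw, huv, huu, huw]; decide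
      have e22 : Bl v2 v2 = 1 := by
        simp only [hv2, map_add, LinearMap.add_apply, hvv, hvw, hwv, hww]; decide
      have e23 : Bl v2 v3 = 0 := by
        simp only [hv2, hv3, map_add, LinearMap.add_apply, hvv, hvu, hvw, hwv, hwu, hww]; decide
      have e33 : Bl v3 v3 = 1 := by
        simp only [hv3, map_add, LinearMap.add_apply, hvv, hvu, hvw, huv, huu, huw, hwv, hwu, hww]
        decide
      have hW3W' : ∀ x ∈ W3, x ∈ W' := fun x hx => hx.1.1
      have hx1 : ∀ x ∈ W3, Bl v1 x = 0 := fun x hx => by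
        simp only [hv1, map_add, LinearMap.add_apply, hW'le x (hW3W' x hx), hW2le x hx.1]; decide
      have hx2 : ∀ x ∈ W3, Bl v2 x = 0 := fun x hx => by
        simp only [hv2, map_add, LinearMap.add_apply, hW'le x (hW3W' x hx), hW3le x hx]; decide
      have hx3 : ∀ x ∈ W3, Bl v3 x = 0 := fun x hx => by
        simp only [hv3, map_add, LinearMap.add_apply, hW'le x (hW3W' x hx), hW2le x hx.1,
          hW3le x hx]; decide
      have hv3ne : v3 ≠ 0 := fun h => by rw [h, map_zero] at e33; exact absurd e33 (by decide)
      have hv3nm : v3 ∉ W3 := fun h => by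
        rw [halt v3 (hW3W' v3 h)] at e33; exact absurd e33 (by decide)
      set V3 := span (ZMod 2) {v3} ⊔ W3 with hV3def
      have hfV3 : finrank (ZMod 2) V3 = finrank (ZMod 2) W3 + 1 := by
        have hdisj : span (ZMod 2) {v3} ⊓ W3 = ⊥ := by
          rw [eq_bot_iff]
          rintro x ⟨hx1', hx2'⟩
          rcases mem_span_singleton.mp hx1' with ⟨c, rfl⟩
          rcases zmod2_cases c with h | h
          · simp [h]
          · rw [h, one_smul] at hx2' ⊢
            exact absurd hx2' hv3nm
        have := Submodule.finrank_sup_add_finrank_inf_eq (span (ZMod 2) {v3}) W3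
        rw [hdisj, finrank_bot, finrank_span_singleton hv3ne, ← hV3def] at this
        omega
      obtain ⟨m3, rfl⟩ : ∃ m3, m = m3 + 2 := ⟨finrank (ZMod 2) W3, by omega⟩
      have hm3 : finrank (ZMod 2) W3 = m3 := by omega
      have hv3V3 : v3 ∈ V3 := mem_sup_left (mem_span_singleton_self v3)
      obtain ⟨c, s3, hs3le, hspanc, hlic, hgramc⟩ :=
        IH (m3 + 1) (by omega) V3 (by rw [hfV3, hm3]) ⟨v3, hv3V3, e33⟩
      have hcV3 : ∀ j, c j ∈ V3 := fun j => hspanc ▸ subset_span (Set.mem_range_self j)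
      have hV3ker1 : V3 ≤ LinearMap.ker (Bl v1) := by
        refine sup_le ?_ ?_
        · rw [span_le, Set.singleton_subset_iff]; exact LinearMap.mem_ker.mpr e13
        · exact fun x hx => LinearMap.mem_ker.mpr (hx1 x hx)
      have hV3ker2 : V3 ≤ LinearMap.ker (Bl v2) := by
        refine sup_le ?_ ?_
        · rw [span_le, Set.singleton_subset_iff]; exact LinearMap.mem_ker.mpr e23
        · exact fun x hx => LinearMap.mem_ker.mpr (hx2 x hx)
      have hc1 : ∀ j, Bl v1 (c j) = 0 := fun j => LinearMap.mem_ker.mp (hV3ker1 (hcV3 j))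
      have hc2 : ∀ j, Bl v2 (c j) = 0 := fun j => LinearMap.mem_ker.mp (hV3ker2 (hcV3 j))
      refine ⟨Fin.cons v1 (Fin.cons v2 c), s3 + 2, by omega, ?_, ?_, ?_⟩
      · rw [Fin.range_cons, Fin.range_cons, span_insert, span_insert, hspanc]
        apply le_antisymm
        · have hW3W : W3 ≤ W := fun x hx => (hW3W' x hx).1
          have hvm : v ∈ W := hvW
          have hum : u ∈ W := huW'.1
          have hwm : w ∈ W := hwW'.1
          refine sup_le ?_ (sup_le ?_ (sup_le ?_ hW3W))
          · rw [span_le, Set.singleton_subset_iff]; exact W.add_mem hvm hum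
          · rw [span_le, Set.singleton_subset_iff]; exact W.add_mem hvm hwm
          · rw [span_le, Set.singleton_subset_iff]
            exact W.add_mem (W.add_mem hvm hum) hwm
        · set S := span (ZMod 2) {v1} ⊔ (span (ZMod 2) {v2} ⊔ (span (ZMod 2) {v3} ⊔ W3))
            with hSdef
          have hv1S : v1 ∈ S := mem_sup_left (mem_span_singleton_self v1)
          have hv2S : v2 ∈ S := mem_sup_right (mem_sup_left (mem_span_singleton_self v2))
          have hv3S : v3 ∈ S :=
            mem_sup_right (mem_sup_right (mem_sup_left (mem_span_singleton_self v3)))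
          have hW3S : W3 ≤ S := fun x hx => mem_sup_right (mem_sup_right (mem_sup_right hx))
          have hvS : v ∈ S := by
            have h1 : ∀ a b c0 : ZMod 2, (a + b) + ((a + c0) + (a + b + c0)) = a := by decide
            have : v1 + (v2 + v3) = v := by ext i; exact h1 (v i) (u i) (w i)
            exact this ▸ S.add_mem hv1S (S.add_mem hv2S hv3S)
          have huS : u ∈ S := by
            have h1 : ∀ a b c0 : ZMod 2, (a + c0) + (a + b + c0) = b := by decide
            have : v2 + v3 = u := by ext i; exact h1 (v i) (u i) (w i)
            exact this ▸ S.add_mem hv2S hv3S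
          have hwS : w ∈ S := by
            have h1 : ∀ a b c0 : ZMod 2, (a + b) + (a + b + c0) = c0 := by decide
            have : v1 + v3 = w := by ext i; exact h1 (v i) (u i) (w i)
            exact this ▸ S.add_mem hv1S hv3S
          rw [← hspan]
          refine sup_le ?_ ?_
          · rw [span_le, Set.singleton_subset_iff]; exact hvS
          · rw [← hspan2]
            refine sup_le ?_ ?_
            · rw [span_le, Set.singleton_subset_iff]; exact hwS
            · rw [← hspan3]
              refine sup_le ?_ ?_
              · rw [span_le, Set.singleton_subset_iff]; exact huS
              · exact hW3S
      · have hli2 : LinearIndependent (ZMod 2) (Fin.cons v2 c) := by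
          refine hlic.fin_cons ?_
          rw [hspanc]
          intro h
          have := LinearMap.mem_ker.mp (hV3ker2 h)
          rw [this] at e22; exact absurd e22 (by decide)
        refine hli2.fin_cons ?_
        rw [Fin.range_cons, span_insert, hspanc]
        intro h
        have hker : span (ZMod 2) {v2} ⊔ V3 ≤ LinearMap.ker (Bl v1) := by
          refine sup_le ?_ hV3ker1
          rw [span_le, Set.singleton_subset_iff]; exact LinearMap.mem_ker.mpr e12
        have := LinearMap.mem_ker.mp (hker h)
        rw [this] at e11; exact absurd e11 (by decide)
      · intro i j
        induction i using Fin.cases with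
        | zero =>
          induction j using Fin.cases with
          | zero => simp [e11]
          | succ j' =>
            induction j' using Fin.cases with
            | zero => simp [e12, (Fin.succ_ne_zero (0 : Fin (m3 + 2))).symm]
            | succ j'' =>
              simp [hc1 j'', (Fin.succ_ne_zero _).symm]
        | succ i' =>
          induction j using Fin.cases with
          | zero =>
            induction i' using Fin.cases with
            | zero => simp [hsymm v2 v1, e12, Fin.succ_ne_zero (0 : Fin (m3 + 2))]
            | succ i'' => simp [hsymm (c i'') v1, hc1 i'', Fin.succ_ne_zero _]
          | succ j' =>
            induction i' using Fin.cases with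
            | zero =>
              induction j' using Fin.cases with
              | zero => simp [e22]
              | succ j'' =>
                rw [Fin.cons_succ, Fin.cons_zero, Fin.cons_succ, Fin.cons_succ, hc2 j'', if_neg]
                rintro ⟨h, -⟩
                have := congrArg Fin.val h
                simp [Fin.val_succ] at this
            | succ i'' =>
              induction j' using Fin.cases with
              | zero =>
                rw [Fin.cons_succ, Fin.cons_succ, Fin.cons_succ, Fin.cons_zero,
                  hsymm (c i'') v2, hc2 i'', if_neg]
                rintro ⟨h, -⟩
                have := congrArg Fin.val h
                simp [Fin.val_succ] at this
              | succ j'' =>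
                rw [Fin.cons_succ, Fin.cons_succ, Fin.cons_succ, Fin.cons_succ, hgramc i'' j'']
                have hiff : (i''.succ.succ = j''.succ.succ ∧ ((i''.succ.succ : Fin (m3+3)) : ℕ) < s3 + 2)
                    ↔ (i'' = j'' ∧ (i'' : ℕ) < s3) := by
                  simp [Fin.succ_inj, Fin.val_succ]
                simp only [hiff]

lemma pi_decomp (x : V n) : x = ∑ a : Fin n, x a • Pi.single a 1 := by
  ext j
  rw [Finset.sum_apply]
  simp [Pi.single_apply]

lemma bilin_expand (Bl : V n →ₗ[ZMod 2] V n →ₗ[ZMod 2] ZMod 2) (x z : V n) :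
    Bl x z = ∑ a : Fin n, ∑ c : Fin n,
      x a * z c * Bl (Pi.single a 1) (Pi.single c 1) := by
  conv_lhs => rw [pi_decomp x]
  rw [_root_.map_sum, LinearMap.sum_apply]
  refine Finset.sum_congr rfl fun a _ => ?_
  rw [_root_.map_smul, LinearMap.smul_apply, smul_eq_mul]
  conv_lhs => rw [pi_decomp z]
  rw [_root_.map_sum, Finset.mul_sum]
  refine Finset.sum_congr rfl fun c _ => ?_
  rw [_root_.map_smul, smul_eq_mul]
  ring

lemma f_sum (f : V n → ZMod 4) (Bl : V n →ₗ[ZMod 2] V n →ₗ[ZMod 2] ZMod 2)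
    (hf0 : f 0 = 0)
    (hf : ∀ x y, f (x + y) = f x + f y + 2 * ((Bl x y).val : ZMod 4))
    (b : Fin n → V n) (hoff : ∀ i j, i ≠ j → Bl (b i) (b j) = 0)
    (y : Fin n → ZMod 2) :
    f (∑ i, y i • b i) = ∑ i, ((y i).val : ZMod 4) * f (b i) := by
  have hsm : ∀ (c : ZMod 2) (x : V n), f (c • x) = (c.val : ZMod 4) * f x := by
    intro c x
    rcases zmod2_cases c with h | h
    · rw [h, zero_smul, hf0]; simp
    · rw [h, one_smul, ZMod.val_one]; norm_num
  have main : ∀ t : Finset (Fin n),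
      f (∑ i ∈ t, y i • b i) = ∑ i ∈ t, ((y i).val : ZMod 4) * f (b i) := by
    intro t
    induction t using Finset.cons_induction with
    | empty => simpa using hf0
    | cons a t' ha IHt =>
      rw [Finset.sum_cons, Finset.sum_cons, hf, IHt, hsm]
      have hB0 : Bl (y a • b a) (∑ i ∈ t', y i • b i) = 0 := by
        rw [_root_.map_smul, LinearMap.smul_apply, _root_.map_sum]
        have : ∀ i ∈ t', Bl (b a) (y i • b i) = 0 := by
          intro i hi
          rw [_root_.map_smul, hoff a i (fun h => ha (h ▸ hi)), smul_zero]
        rw [Finset.sum_congr rfl this, Finset.sum_const_zero, smul_zero]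
      rw [hB0]
      show _ + _ + 2 * (((0 : ZMod 2).val : ℕ) : ZMod 4) = _
      norm_num
  exact main Finset.univ

end Stmt9Aux

theorem stmt_9 (n : ℕ) (f : (Fin n → ZMod 2) → ZMod 4)
    (B : (Fin n → ZMod 2) → (Fin n → ZMod 2) → ZMod 2)
    (hsymm : ∀ x y, B x y = B y x)
    (hadd : ∀ x y z, B (x + y) z = B x z + B y z)
    (hf0 : f 0 = 0)
    (hf : ∀ x y, f (x + y) = f x + f y + emb2 (B x y))
    (hnonalt : ∃ x, B x x = 1)
    (M : Matrix (Fin n) (Fin n) (ZMod 2))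
    (hM : ∀ i j, M i j = B (Pi.single i 1) (Pi.single j 1))
    (r : ℕ) (hr : r = M.rank) :
    ∃ (φ : (Fin n → ZMod 2) ≃ₗ[ZMod 2] (Fin n → ZMod 2)) (w : Fin n → Fin 2),
      ∀ y : Fin n → ZMod 2,
        f (φ y) =
          (∑ j ∈ Finset.univ.filter fun j : Fin n => j.1 < r,
            (((y j).val : ℕ) : ZMod 4)) +
          2 * ∑ i : Fin n, ((w i : ℕ) : ZMod 4) * (((y i).val : ℕ) : ZMod 4) := by
  classical
  -- bundle B as a bilinear map
  have hB0 : ∀ y, B 0 y = 0 := by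
    intro y
    have h := hadd 0 0 y
    rw [add_zero] at h
    exact add_left_cancel (h.symm.trans (add_zero _).symm)
  have hsmul1 : ∀ (c : ZMod 2) x y, B (c • x) y = c • B x y := by
    intro c x y
    rcases Stmt9Aux.zmod2_cases c with h | h
    · rw [h, zero_smul, zero_smul, hB0]
    · rw [h, one_smul, one_smul]
  set Bl : Stmt9Aux.V n →ₗ[ZMod 2] Stmt9Aux.V n →ₗ[ZMod 2] ZMod 2 :=
    LinearMap.mk₂ (ZMod 2) B hadd hsmul1
      (fun x y z => by rw [hsymm, hadd, hsymm y x, hsymm z x])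
      (fun c x y => by rw [hsymm, hsmul1, hsymm y x]) with hBl
  have hBl_apply : ∀ x y, Bl x y = B x y := fun x y => rfl
  have hsymm' : ∀ x y, Bl x y = Bl y x := fun x y => hsymm x y
  -- get adapted basis
  have hfin : finrank (ZMod 2) (⊤ : Submodule (ZMod 2) (Stmt9Aux.V n)) = n := by
    rw [finrank_top]
    simp [Module.finrank_pi]
  obtain ⟨x0, hx0⟩ := hnonalt
  obtain ⟨b, s, hs, hspan, hli, hgram⟩ :=
    Stmt9Aux.key Bl hsymm' n ⊤ hfin ⟨x0, Submodule.mem_top, hx0⟩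
  let bbasis : Basis (Fin n) (ZMod 2) (Stmt9Aux.V n) := Basis.mk hli (hspan.ge)
  have hbb : ∀ i, bbasis i = b i := fun i => by
    simp [bbasis, Basis.coe_mk]
  -- transition matrix
  set P : Matrix (Fin n) (Fin n) (ZMod 2) := (Pi.basisFun (ZMod 2) (Fin n)).toMatrix bbasis
    with hPdef
  have hPa : ∀ a i, P a i = b i a := by
    intro a i
    rw [hPdef, Basis.toMatrix_apply, Pi.basisFun_repr, hbb]
  set d : Fin n → ZMod 2 := fun i => if (i : ℕ) < s then 1 else 0 with hd
  have hcong : Pᵀ * M * P = Matrix.diagonal d := by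
    ext i j
    have hexp : Bl (b i) (b j) = ∑ a : Fin n, ∑ c : Fin n, b i a * b j c * M a c := by
      rw [Stmt9Aux.bilin_expand Bl (b i) (b j)]
      exact Finset.sum_congr rfl fun a _ => Finset.sum_congr rfl fun c _ => by
        rw [hBl_apply, ← hM]
    have hlhs : (Pᵀ * M * P) i j = ∑ c : Fin n, ∑ a : Fin n, b i a * M a c * b j c := by
      rw [Matrix.mul_apply]
      refine Finset.sum_congr rfl fun c _ => ?_
      rw [Matrix.mul_apply, Finset.sum_mul, hPa]
      exact Finset.sum_congr rfl fun a _ => by rw [Matrix.transpose_apply, hPa]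
    rw [hlhs, Finset.sum_comm]
    have : ∑ a : Fin n, ∑ c : Fin n, b i a * M a c * b j c = Bl (b i) (b j) := by
      rw [hexp]
      exact Finset.sum_congr rfl fun a _ => Finset.sum_congr rfl fun c _ => by ring
    rw [this, hgram i j]
    by_cases hij : i = j
    · subst hij; simp [Matrix.diagonal_apply, hd]
    · simp [Matrix.diagonal_apply, hij]
  -- rank computation
  letI : Invertible P := (Pi.basisFun (ZMod 2) (Fin n)).invertibleToMatrix bbasis
  letI : Invertible Pᵀ := Matrix.invertibleTranspose P
  have hrank1 : (Pᵀ * M * P).rank = M.rank := by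
    refine le_antisymm ?_ ?_
    · exact le_trans (Matrix.rank_mul_le_left _ _)
        (le_trans (Matrix.rank_mul_le_right _ _) le_rfl)
    · have hMeq : ⅟Pᵀ * (Pᵀ * M * P) * ⅟P = M := by
        simp [Matrix.mul_assoc]
      conv_lhs => rw [← hMeq]
      exact le_trans (Matrix.rank_mul_le_left _ _)
        (le_trans (Matrix.rank_mul_le_right _ _) le_rfl)
  have hrank2 : (Matrix.diagonal d).rank = s := by
    rw [Matrix.rank_diagonal]
    have h1 : ∀ i : Fin n, d i ≠ 0 ↔ (i : ℕ) < s := by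
      intro i
      rw [hd]
      by_cases h : (i : ℕ) < s <;> simp [h]
    rw [Fintype.card_congr (Equiv.subtypeEquivRight h1)]
    have e2 : {i : Fin n // (i : ℕ) < s} ≃ Fin s :=
      { toFun := fun x => ⟨x.1.1, x.2⟩
        invFun := fun j => ⟨⟨j.1, lt_of_lt_of_le j.2 hs⟩, j.2⟩
        left_inv := fun x => by ext; rfl
        right_inv := fun j => rfl }
    rw [Fintype.card_congr e2, Fintype.card_fin]
  have hsr : s = r := by rw [hr, ← hrank1, hcong, hrank2]
  subst hsr
  -- the automorphism
  set φ : (Fin n → ZMod 2) ≃ₗ[ZMod 2] (Fin n → ZMod 2) :=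
    (Pi.basisFun (ZMod 2) (Fin n)).equiv bbasis (Equiv.refl _) with hφdef
  have hφy : ∀ y : Fin n → ZMod 2, φ y = ∑ i, y i • b i := by
    intro y
    conv_lhs => rw [← (Pi.basisFun (ZMod 2) (Fin n)).sum_repr y]
    rw [_root_.map_sum]
    refine Finset.sum_congr rfl fun i _ => ?_
    rw [_root_.map_smul, hφdef, Basis.equiv_apply, Equiv.refl_apply, hbb, Pi.basisFun_repr]
  -- the vector w
  set w : Fin n → Fin 2 := fun i => if f (b i) = 2 ∨ f (b i) = 3 then 1 else 0 with hwdef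
  have hfb : ∀ i : Fin n,
      f (b i) = (if (i : ℕ) < s then 1 else 0) + 2 * ((w i : ℕ) : ZMod 4) := by
    intro i
    have h2f : f (b i) + f (b i) + emb2 (B (b i) (b i)) = 0 := by
      have h := hf (b i) (b i)
      rw [Stmt9Aux.addself, hf0] at h
      exact h.symm
    have hBii : B (b i) (b i) = if (i : ℕ) < s then 1 else 0 := by
      have := hgram i i
      rw [hBl_apply] at this
      simpa using this
    rw [hBii] at h2f
    by_cases hi : (i : ℕ) < s
    · rw [if_pos hi] at h2f ⊢
      have hval : f (b i) = 1 ∨ f (b i) = 3 := by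
        have hall : ∀ a : ZMod 4, a + a + emb2 1 = 0 → a = 1 ∨ a = 3 := by decide
        exact hall _ h2f
      rcases hval with h | h
      · have hwi : w i = 0 := by rw [hwdef]; simp only [h]; decide
        rw [h, hwi]
        norm_num
      · have hwi : w i = 1 := by rw [hwdef]; simp only [h]; decide
        rw [h, hwi]
        decide
    · rw [if_neg hi] at h2f ⊢
      have hval : f (b i) = 0 ∨ f (b i) = 2 := by
        have hall : ∀ a : ZMod 4, a + a + emb2 0 = 0 → a = 0 ∨ a = 2 := by decide
        exact hall _ h2f
      rcases hval with h | h
      · have hwi : w i = 0 := by rw [hwdef]; simp only [h]; decide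
        rw [h, hwi]
        norm_num
      · have hwi : w i = 1 := by rw [hwdef]; simp only [h]; decide
        rw [h, hwi]
        decide
  refine ⟨φ, w, fun y => ?_⟩
  rw [hφy y]
  have hoff : ∀ i j, i ≠ j → Bl (b i) (b j) = 0 := by
    intro i j hij
    rw [hgram i j, if_neg (by tauto)]
  rw [Stmt9Aux.f_sum f Bl hf0 (fun x y => hf x y) b hoff y]
  have hterm : ∀ i : Fin n, (((y i).val : ℕ) : ZMod 4) * f (b i) =
      (if (i : ℕ) < s then (((y i).val : ℕ) : ZMod 4) else 0)
        + 2 * (((w i : ℕ) : ZMod 4) * (((y i).val : ℕ) : ZMod 4)) := by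
    intro i
    rw [hfb i]
    by_cases h : (i : ℕ) < s
    · rw [if_pos h, if_pos h]; ring
    · rw [if_neg h, if_neg h]; ring
  rw [Finset.sum_congr rfl fun i _ => hterm i, Finset.sum_add_distrib,
    ← Finset.mul_sum, Finset.sum_filter]
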